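/- Let 𝔍 be a W-graph ideal with respect to J, (c_w) the associated basis, μ_{y,w} the constant term of q_{y,w}. Define μ(c_y, c_w) = μ_{y,w} if y < w, μ_{w,y} if w < y, and 0 otherwise, and τ(c_w) = D_J(w) (the descent set of w). Then the triple (C, μ, τ) is a W-graph; i.e., the rules T_s c_w = −q⁻¹ c_w if s ∈ τ(c_w) and T_s c_w = q c_w + Σ_{u: s ∈ τ(u)} μ(u, c_w) u if s ∉ τ(c_w) define an H(W)-module structure on the free ℤ[q,q⁻¹]-module with basis C. -/

import Mathlib

open LaurentPolynomial Polynomial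

noncomputable section

namespace WGI

/-- The ring `A = ℤ[q,q⁻¹]` of Laurent polynomials. -/
abbrev A : Type := LaurentPolynomial ℤ

/-- The indeterminate `q`. -/
def Q : A := LaurentPolynomial.T 1

/-- The element `q⁻¹`. -/
def Qi : A := LaurentPolynomial.T (-1)

variable {B W : Type} [Group W] {M : CoxeterMatrix B} (cs : CoxeterSystem M W)

/-- One step of the relation generating the Bruhat order: `w = tu` for a reflection `t`
(or `t = 1`) and `l(u) ≤ l(w)`. -/
def BStep (u w : W) : Prop :=
  cs.length u ≤ cs.length w ∧ ∃ t : W, (cs.IsReflection t ∨ t = 1) ∧ w = t * u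

/-- The Bruhat order on `W`: the transitive (and reflexive) closure of `BStep`. -/
def BrLe (u w : W) : Prop := Relation.ReflTransGen (BStep cs) u w

/-- Strict Bruhat order. -/
def BrLt (u w : W) : Prop := BrLe cs u w ∧ u ≠ w

/-- The left weak order: `u ≤_L w` iff `l(wu⁻¹) = l(w) - l(u)`, i.e. `u` is a suffix of `w`. -/
def WkLe (u w : W) : Prop := cs.length (w * u⁻¹) + cs.length u = cs.length w

/-- Strict left weak order. -/
def WkLt (u w : W) : Prop := WkLe cs u w ∧ u ≠ w

/-- An ideal of `(W, ≤_L)`: a subset closed under taking suffixes. -/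
def IsIdealWk (I : Set W) : Prop := ∀ u w : W, WkLe cs u w → w ∈ I → u ∈ I

/-- The set `D_J` of minimal left coset representatives of `W_J`. -/
def DD (J : Set B) : Set W := { w | ∀ j ∈ J, cs.length w < cs.length (w * cs.simple j) }

/-- Strong ascent: `sw > w` and `sw ∈ I`. -/
def SA (I : Set W) (s : B) (w : W) : Prop :=
  cs.length w < cs.length (cs.simple s * w) ∧ cs.simple s * w ∈ I

/-- Strong descent: `sw < w`. -/
def SD (s : B) (w : W) : Prop := cs.length (cs.simple s * w) < cs.length w

/-- Weak ascent: `sw > w` and `sw ∈ D_J \ I`. -/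
def WA (I : Set W) (J : Set B) (s : B) (w : W) : Prop :=
  cs.length w < cs.length (cs.simple s * w) ∧ cs.simple s * w ∈ DD cs J \ I

/-- Weak descent: `sw > w` and `sw ∉ D_J`. -/
def WD (J : Set B) (s : B) (w : W) : Prop :=
  cs.length w < cs.length (cs.simple s * w) ∧ cs.simple s * w ∉ DD cs J

/-- Descents: strong or weak. -/
def Desc (J : Set B) (s : B) (w : W) : Prop := SD cs s w ∨ WD cs J s w

/-- Ascents: strong or weak. -/
def Asc (I : Set W) (J : Set B) (s : B) (w : W) : Prop := SA cs I s w ∨ WA cs I J s w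

/-- The data making the ideal `I` (of the left weak order, contained in `D_J`) a
`W`-graph ideal with respect to `J`: an `H(W)`-module (a module together with operators
`T s` satisfying the quadratic and braid relations of the Hecke algebra) which is free
over `A` with basis indexed by `I`, on which the generators act by the four-case formula
of Definition 5.2, together with a compatible semilinear bar involution fixing `b₁`. -/
structure WGModule (I : Set W) (J : Set B) where
  V : Type
  [acg : AddCommGroup V]
  [mod : Module A V]
  ideal : IsIdealWk cs I
  subset : I ⊆ DD cs J
  one_mem : (1 : W) ∈ I
  bas : Module.Basis I A V
  T : B → V →ₗ[A] V
  quad : ∀ s : B, (T s) ∘ₗ (T s) = LinearMap.id + (Q - Qi) • T s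
  braid : ∀ s t : B,
    ((CoxeterSystem.alternatingWord s t (M s t)).map fun i => (T i : Module.End A V)).prod =
    ((CoxeterSystem.alternatingWord t s (M s t)).map fun i => (T i : Module.End A V)).prod
  /-- the polynomials `r^s_{y,w}` (divided by `q`, as elements of `ℤ[q]` with zero constant
  term they are recorded in `qℤ[q]` via `r_const`); `r s w y` is `r^s_{y,w}`. -/
  r : B → I → (I →₀ Polynomial ℤ)
  r_const : ∀ (s : B) (w y : I), ((r s w) y).coeff 0 = 0
  r_supp : ∀ (s : B) (w y : I), (r s w) y ≠ 0 → BrLt cs (y : W) (cs.simple s * (w : W))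
  act_SA : ∀ (s : B) (w : I) (h : SA cs I s (w : W)),
    T s (bas w) = bas ⟨cs.simple s * (w : W), h.2⟩
  act_SD : ∀ (s : B) (w : I), SD cs s (w : W) → ∀ h' : cs.simple s * (w : W) ∈ I,
    T s (bas w) = bas ⟨cs.simple s * (w : W), h'⟩ + (Q - Qi) • bas w
  act_WD : ∀ (s : B) (w : I), WD cs J s (w : W) → T s (bas w) = -Qi • bas w
  act_WA : ∀ (s : B) (w : I), WA cs I J s (w : W) →
    T s (bas w) = Q • bas w - (r s w).sum fun y p => (Polynomial.toLaurent p) • bas y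
  bar : V → V
  bar_add : ∀ x y : V, bar (x + y) = bar x + bar y
  bar_smul : ∀ (a : A) (x : V), bar (a • x) = (LaurentPolynomial.invert a) • bar x
  bar_one : bar (bas ⟨(1 : W), one_mem⟩) = bas ⟨(1 : W), one_mem⟩
  bar_T : ∀ (s : B) (x : V), bar (T s x) = T s (bar x) - (Q - Qi) • bar x

attribute [instance] WGModule.acg WGModule.mod

/-- `I` is a `W`-graph ideal with respect to `J`. -/
def IsWGraphIdeal (I : Set W) (J : Set B) : Prop := Nonempty (WGModule cs I J)


open scoped Classical

/-!
Let `L = ⊕ ℤ[q] b_v`. Since `bar` is unitriangular with respect to length, a bar-invariant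
vector of `qL` is zero; as `c_w ≡ b_w mod qL`, a bar-invariant vector of `L` is therefore
`∑ n_v c_v`, where `n_v` is the constant term of its `b_v`-coordinate.

If `s` is an ascent of `w`, then `(T_s - q) c_w` is bar-invariant and lies in `L`, and reading
off constant terms gives `T_s c_w = q c_w + c_{sw} + ∑_{s ∈ D_J(v)} p_{w,v}(0) c_v`.
If `s` is a descent of `w`, then `(T_s + q⁻¹) c_w = ∑ n_v c_v` likewise, and all `n_v` vanish:
at a `v` of maximal length with `n_v ≠ 0`, the coordinate equations of `T_s + q⁻¹` put the
constant `n_v` into `qℤ[q]` or into `(q + q⁻¹) qℤ[q]`, both of which meet `ℤ` in `0`.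
Here the quadratic relation enters: it makes `T_s` act by `-q⁻¹` on the weak-ascent terms
`∑_y r^s_{y,u} b_y`. Comparing constant terms in `(T_s + q⁻¹) c_u = 0` then gives
`p_{u,w}(0) = δ_{u,sw}` for `s ∈ D_J(u)`, `s ∉ D_J(w)`, which turns the ascent formula into the
`W`-graph formula.
-/

/-- `q^n ℤ[q]`. -/
def qPowPoly (n : ℤ) : AddSubgroup A where
  carrier := {a | ∀ k < n, a.coeff k = 0}
  zero_mem' _ _ := rfl
  add_mem' ha hb k hk := by simp [AddMonoidAlgebra.coeff_add, ha k hk, hb k hk]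
  neg_mem' ha k hk := by simp [AddMonoidAlgebra.coeff_neg, ha k hk]

lemma qPowPoly_anti {m n : ℤ} (h : m ≤ n) : qPowPoly n ≤ qPowPoly m :=
  fun _ ha k hk => ha k (hk.trans_le h)

lemma le_of_mem_qPowPoly {n k : ℤ} {a : A} (ha : a ∈ qPowPoly n) (hk : a.coeff k ≠ 0) :
    n ≤ k :=
  not_lt.mp fun h => hk (ha k h)

lemma mul_mem_qPowPoly {m n : ℤ} {a b : A} (ha : a ∈ qPowPoly m) (hb : b ∈ qPowPoly n) :
    a * b ∈ qPowPoly (m + n) := by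
  intro k hk
  by_contra hne
  obtain ⟨i, hi, j, hj, rfl⟩ := Finset.mem_add.mp
    (AddMonoidAlgebra.support_coeff_mul_subset a b (Finsupp.mem_support_iff.mpr hne))
  have := le_of_mem_qPowPoly ha (Finsupp.mem_support_iff.mp hi)
  have := le_of_mem_qPowPoly hb (Finsupp.mem_support_iff.mp hj)
  omega

lemma T_mem_qPowPoly (n : ℤ) : (T n : A) ∈ qPowPoly n := fun k hk => by
  simp [LaurentPolynomial.T_apply, hk.ne']

lemma Q_mem_qPowPoly : Q ∈ qPowPoly 1 := T_mem_qPowPoly 1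

lemma Qi_mem_qPowPoly : Qi ∈ qPowPoly (-1) := T_mem_qPowPoly (-1)

lemma coeff_intCast (n k : ℤ) : (n : A).coeff k = if k = 0 then n else 0 := by
  rw [← map_intCast (LaurentPolynomial.C (R := ℤ)), LaurentPolynomial.C_apply, Int.cast_id]

lemma intCast_mem_qPowPoly (n : ℤ) : (n : A) ∈ qPowPoly 0 := fun k hk => by
  simp [coeff_intCast, hk.ne]

lemma one_mem_qPowPoly : (1 : A) ∈ qPowPoly 0 := by
  simpa using intCast_mem_qPowPoly 1

lemma eq_zero_of_intCast_mem_qPowPoly {n : ℤ} (h : (n : A) ∈ qPowPoly 1) : n = 0 := by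
  simpa [coeff_intCast] using h 0 one_pos

lemma sub_coeff_zero_mem_qPowPoly {a : A} (ha : a ∈ qPowPoly 0) :
    a - (a.coeff 0 : A) ∈ qPowPoly 1 := by
  intro k hk
  rcases lt_or_ge k 0 with hk' | hk'
  · simp [AddMonoidAlgebra.coeff_sub, coeff_intCast, ha k hk', hk'.ne]
  · obtain rfl : k = 0 := by omega
    simp [AddMonoidAlgebra.coeff_sub, coeff_intCast]

lemma coeff_toLaurent_natCast (p : ℤ[X]) (k : ℕ) : (toLaurent p).coeff k = p.coeff k := by
  rw [coeff_toLaurent]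
  exact Finsupp.mapDomain_apply Nat.castEmbedding.injective _ k

lemma coeff_toLaurent_of_neg (p : ℤ[X]) {k : ℤ} (hk : k < 0) : (toLaurent p).coeff k = 0 := by
  rw [coeff_toLaurent]
  exact Finsupp.mapDomain_of_notMem_range _ _ (by rintro ⟨n, rfl⟩; simp at hk; omega)

lemma toLaurent_mem_qPowPoly (p : ℤ[X]) : toLaurent p ∈ qPowPoly 0 :=
  fun _ => coeff_toLaurent_of_neg p

lemma toLaurent_mem_qPowPoly_one {p : ℤ[X]} (hp : p.coeff 0 = 0) : toLaurent p ∈ qPowPoly 1 :=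
  fun k hk => by
    rcases lt_or_ge k 0 with hk' | hk'
    · exact coeff_toLaurent_of_neg p hk'
    · obtain rfl : k = 0 := by omega
      simpa using (coeff_toLaurent_natCast p 0).trans hp

lemma coeff_T_mul (n : ℤ) (a : A) (k : ℤ) : (T n * a).coeff k = a.coeff (k - n) := by
  rw [T, AddMonoidAlgebra.coeff_single_mul_apply, one_mul, neg_add_eq_sub]

lemma coeff_Q_mul (a : A) (k : ℤ) : (Q * a).coeff k = a.coeff (k - 1) := coeff_T_mul 1 a k

lemma coeff_Qi_mul (a : A) (k : ℤ) : (Qi * a).coeff k = a.coeff (k + 1) := by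
  rw [Qi, coeff_T_mul, sub_neg_eq_add]

lemma coeff_Q_add_Qi_mul (a : A) (k : ℤ) :
    ((Q + Qi) * a).coeff k = a.coeff (k - 1) + a.coeff (k + 1) := by
  rw [add_mul, AddMonoidAlgebra.coeff_add, Finsupp.add_apply, coeff_Q_mul, coeff_Qi_mul]

lemma Qi_mul_Q : Qi * Q = 1 := by
  rw [Qi, Q, ← LaurentPolynomial.T_add, neg_add_cancel, LaurentPolynomial.T_zero]

lemma invert_Q : invert Q = Qi := LaurentPolynomial.invert_T 1

lemma invert_Qi : invert Qi = Q := by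
  rw [Qi, LaurentPolynomial.invert_T, neg_neg, Q]

lemma eq_zero_of_invert_eq_self {a : A} (ha : a ∈ qPowPoly 1) (h : invert a = a) : a = 0 := by
  ext k
  rcases lt_or_ge k 1 with hk | hk
  · exact ha k hk
  · rw [← h, LaurentPolynomial.invert_apply]
    exact ha (-k) (by omega)

/-- A nonzero element of `qℤ[q]` has a top coefficient `f_d` with `d ≥ 1`, which survives in
degree `d + 1` of `(q + q⁻¹) f`. -/
lemma eq_zero_of_Q_add_Qi_mul_eq_intCast {f : A} {n : ℤ} (hf : f ∈ qPowPoly 1)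
    (h : (Q + Qi) * f = n) : n = 0 := by
  obtain rfl : f = 0 := by
    by_contra hne
    have hsupp : f.coeff.support.Nonempty := Finsupp.support_nonempty_iff.mpr (by simpa using hne)
    set d := f.coeff.support.max' hsupp
    have hd : f.coeff d ≠ 0 := Finsupp.mem_support_iff.mp (Finset.max'_mem _ hsupp)
    have hd1 : 1 ≤ d := le_of_mem_qPowPoly hf hd
    have htop : f.coeff (d + 2) = 0 := by
      by_contra h2
      have := Finset.le_max' _ _ (Finsupp.mem_support_iff.mpr h2)
      omega
    have := congrArg (fun a : A => a.coeff (d + 1)) h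
    simp only [coeff_Q_add_Qi_mul, coeff_intCast, add_sub_cancel_right] at this
    rw [show d + 1 + 1 = d + 2 by ring, htop, add_zero, if_neg (by omega)] at this
    exact hd this
  simpa [coeff_intCast] using (congrArg (fun a : A => a.coeff 0) h).symm

section Coxeter

variable {cs}

lemma BrLe.eq_or_length_lt {u w : W} (h : BrLe cs u w) : u = w ∨ cs.length u < cs.length w := by
  induction h with
  | refl => exact .inl rfl
  | tail _ hstep ih =>
    obtain ⟨hle, t, ht | rfl, rfl⟩ := hstep
    · have hlt := lt_of_le_of_ne hle (ht.length_mul_right_ne _).symm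
      rcases ih with rfl | ih
      exacts [.inr hlt, .inr (ih.trans hlt)]
    · rwa [one_mul]

lemma BrLt.length_lt {u w : W} (h : BrLt cs u w) : cs.length u < cs.length w :=
  h.1.eq_or_length_lt.resolve_left h.2

lemma brLt_simple_mul {s : B} {w : W} (h : cs.length w < cs.length (cs.simple s * w)) :
    BrLt cs w (cs.simple s * w) :=
  ⟨.single ⟨h.le, _, .inl (cs.isReflection_simple s), rfl⟩, fun he => h.ne (congrArg _ he)⟩

lemma simple_mul_eq_iff {s : B} {u v : W} : cs.simple s * u = v ↔ u = cs.simple s * v :=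
  ⟨fun h => by rw [← h, cs.simple_mul_simple_cancel_left],
    fun h => by rw [h, cs.simple_mul_simple_cancel_left]⟩

end Coxeter

section Ascents

variable {cs} {I : Set W} {J : Set B}

lemma SD_or_SA_or_WA_or_WD (s : B) (u : W) :
    SD cs s u ∨ SA cs I s u ∨ WA cs I J s u ∨ WD cs J s u := by
  unfold SD SA WA WD
  rcases cs.length_simple_mul u s with h | h
  · by_cases h1 : cs.simple s * u ∈ I
    · exact .inr (.inl ⟨by omega, h1⟩)
    by_cases h2 : cs.simple s * u ∈ DD cs J
    · exact .inr (.inr (.inl ⟨by omega, h2, h1⟩))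
    · exact .inr (.inr (.inr ⟨by omega, h2⟩))
  · exact .inl (by omega)

lemma length_lt_of_not_desc {s : B} {u : W} (h : ¬ Desc cs J s u) :
    cs.length u < cs.length (cs.simple s * u) := by
  unfold Desc SD at h
  rcases cs.length_simple_mul u s with h' | h' <;> omega

lemma SA.not_desc {s : B} {u : W} (hI : I ⊆ DD cs J) (h : SA cs I s u) : ¬ Desc cs J s u := by
  rintro (hd | hd)
  exacts [(lt_asymm h.1 hd).elim, hd.2 (hI h.2)]

lemma WA.not_desc {s : B} {u : W} (h : WA cs I J s u) : ¬ Desc cs J s u := by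
  rintro (hd | hd)
  exacts [(lt_asymm h.1 hd).elim, hd.2 h.2.1]

lemma SA_or_WA_of_not_desc {s : B} {u : W} (h : ¬ Desc cs J s u) :
    SA cs I s u ∨ WA cs I J s u := by
  rcases SD_or_SA_or_WA_or_WD (I := I) s u with h' | h' | h' | h'
  exacts [(h (.inl h')).elim, .inl h', .inr h', (h (.inr h')).elim]

variable (cs I J) in
/-- The diagonal part of `T_s + q⁻¹` on `b_v`, the weak-ascent terms `r^s` aside. -/
def diagCoeff (s : B) (v : W) : A :=
  if SD cs s v then Q else if cs.simple s * v ∈ I then Qi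
  else if cs.simple s * v ∈ DD cs J then Q + Qi else 0

lemma diagCoeff_of_SD {s : B} {v : W} (h : SD cs s v) : diagCoeff cs I J s v = Q := if_pos h

lemma diagCoeff_of_SA {s : B} {v : W} (h : SA cs I s v) : diagCoeff cs I J s v = Qi := by
  rw [diagCoeff, if_neg (show ¬ SD cs s v from lt_asymm h.1), if_pos h.2]

lemma diagCoeff_of_WA {s : B} {v : W} (h : WA cs I J s v) : diagCoeff cs I J s v = Q + Qi := by
  rw [diagCoeff, if_neg (show ¬ SD cs s v from lt_asymm h.1), if_neg h.2.2, if_pos h.2.1]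

lemma diagCoeff_of_WD {s : B} {v : W} (hI : I ⊆ DD cs J) (h : WD cs J s v) :
    diagCoeff cs I J s v = 0 := by
  rw [diagCoeff, if_neg (show ¬ SD cs s v from lt_asymm h.1), if_neg fun h' => h.2 (hI h'),
    if_neg h.2]

lemma diagCoeff_mem_qPowPoly (s : B) (v : W) : diagCoeff cs I J s v ∈ qPowPoly (-1) := by
  have hQ := qPowPoly_anti (m := -1) (by norm_num) Q_mem_qPowPoly
  unfold diagCoeff
  split_ifs
  exacts [hQ, Qi_mem_qPowPoly, add_mem hQ Qi_mem_qPowPoly, zero_mem _]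

lemma coeff_zero_diagCoeff_mul (hI : I ⊆ DD cs J) (s : B) (v : W) {a : A}
    (ha : a ∈ qPowPoly 0) :
    (diagCoeff cs I J s v * a).coeff 0 = if Desc cs J s v then 0 else a.coeff 1 := by
  rcases SD_or_SA_or_WA_or_WD (I := I) (J := J) s v with h | h | h | h
  · rw [diagCoeff_of_SD h, if_pos (.inl h), coeff_Q_mul]
    exact ha _ (by norm_num)
  · rw [diagCoeff_of_SA h, if_neg (h.not_desc hI), coeff_Qi_mul, zero_add]
  · rw [diagCoeff_of_WA h, if_neg h.not_desc, coeff_Q_add_Qi_mul, zero_add,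
      ha _ (by norm_num), zero_add]
  · rw [diagCoeff_of_WD hI h, if_pos (.inr h), zero_mul]
    rfl

end Ascents

namespace WGModule

variable {cs} {I : Set W} {J : Set B}

lemma simple_mul_mem (D : WGModule cs I J) {s : B} {u : I} (h : SD cs s u) :
    cs.simple s * (u : W) ∈ I := by
  refine D.ideal _ u ?_ u.2
  rw [WkLe, mul_inv_rev, mul_inv_cancel_left, cs.inv_simple, cs.length_simple]
  unfold SD at h
  rcases cs.length_simple_mul u s with h' | h' <;> omega

variable (D : WGModule cs I J)

def rVec (s : B) (u : I) : D.V := (D.r s u).sum fun y p => toLaurent p • D.bas y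

lemma repr_rVec (s : B) (u v : I) : D.bas.repr (D.rVec s u) v = toLaurent (D.r s u v) := by
  simp +contextual [rVec, Finsupp.sum, Finsupp.single_apply]

def waPart (s : B) : D.V →ₗ[A] D.V :=
  D.bas.constr A fun u => if WA cs I J s u then D.rVec s u else 0

lemma T_bas_add_Qi_smul_add_waPart (s : B) (u : I) :
    D.T s (D.bas u) + Qi • D.bas u + D.waPart s (D.bas u) =
      (if h : cs.simple s * (u : W) ∈ I then D.bas ⟨_, h⟩ else 0) +
        diagCoeff cs I J s u • D.bas u := by
  rw [waPart, D.bas.constr_basis]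
  rcases SD_or_SA_or_WA_or_WD (I := I) (J := J) s (u : W) with h | h | h | h
  · have hnWA : ¬ WA cs I J s u := fun h' => lt_asymm h'.1 h
    rw [D.act_SD s u h (D.simple_mul_mem h), dif_pos (D.simple_mul_mem h), diagCoeff_of_SD h,
      if_neg hnWA]
    module
  · have hnWA : ¬ WA cs I J s u := fun h' => h'.2.2 h.2
    rw [D.act_SA s u h, dif_pos h.2, diagCoeff_of_SA h, if_neg hnWA]
    module
  · rw [D.act_WA s u h, dif_neg h.2.2, diagCoeff_of_WA h, if_pos h, rVec]
    module
  · have hnWA : ¬ WA cs I J s u := fun h' => h.2 h'.2.1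
    rw [D.act_WD s u h, dif_neg (fun h' => h.2 (D.subset h')), diagCoeff_of_WD D.subset h,
      if_neg hnWA]
    module

lemma repr_dite_bas_simple_mul (s : B) (u v : I) :
    D.bas.repr (if h : cs.simple s * (u : W) ∈ I then D.bas ⟨_, h⟩ else 0) v =
      if (u : W) = cs.simple s * v then 1 else 0 := by
  split_ifs with hu huv huv
  · simp [huv]
  · simp [Subtype.ext_iff, simple_mul_eq_iff, huv]
  · exact (hu (by rw [huv, cs.simple_mul_simple_cancel_left]; exact v.2)).elim
  · simp

lemma repr_T_add_Qi_smul (s : B) (x : D.V) (v : I) :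
    D.bas.repr (D.T s x + Qi • x) v =
      (if h : cs.simple s * (v : W) ∈ I then D.bas.repr x ⟨_, h⟩ else 0) +
        diagCoeff cs I J s v * D.bas.repr x v - D.bas.repr (D.waPart s x) v := by
  let F : D.V →ₗ[A] A := Finsupp.lapply v ∘ₗ D.bas.repr.toLinearMap ∘ₗ
    (D.T s + Qi • LinearMap.id + D.waPart s)
  let G : D.V →ₗ[A] A :=
    ((if h : cs.simple s * (v : W) ∈ I then Finsupp.lapply ⟨_, h⟩ else 0) +
      diagCoeff cs I J s v • Finsupp.lapply v) ∘ₗ D.bas.repr.toLinearMap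
  have hFG : F = G := D.bas.ext fun u => by
    simp only [F, G, LinearMap.comp_apply, LinearMap.add_apply, LinearMap.smul_apply,
      LinearMap.id_apply, LinearEquiv.coe_coe, D.T_bas_add_Qi_smul_add_waPart]
    rw [map_add, Finsupp.lapply_apply, Finsupp.add_apply, repr_dite_bas_simple_mul]
    have hdiag : D.bas.repr (diagCoeff cs I J s u • D.bas u) v =
        diagCoeff cs I J s v • (D.bas.repr (D.bas u)) v := by
      rcases eq_or_ne u v with rfl | huv
      · simp
      · simp [huv]
    rw [hdiag]
    congr 1
    by_cases hv : cs.simple s * (v : W) ∈ I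
    · simp [hv, Finsupp.single_apply, Subtype.ext_iff]
    · have : (u : W) ≠ cs.simple s * v := fun h => hv (h ▸ u.2)
      simp [hv, this]
  have := LinearMap.congr_fun hFG x
  simp only [F, G, LinearMap.comp_apply, LinearMap.add_apply, LinearMap.smul_apply,
      LinearMap.id_apply, LinearEquiv.coe_coe, map_add] at this
  rw [map_add, Finsupp.add_apply, eq_sub_iff_add_eq]
  by_cases hv : cs.simple s * (v : W) ∈ I <;> simpa [hv] using this

lemma T_rVec {s : B} {u : I} (h : WA cs I J s u) : D.T s (D.rVec s u) = -(Qi • D.rVec s u) := by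
  have hq := LinearMap.congr_fun (D.quad s) (D.bas u)
  simp only [LinearMap.comp_apply, LinearMap.add_apply, LinearMap.id_apply,
    LinearMap.smul_apply, D.act_WA s u h, map_sub, map_smul] at hq
  rw [← rVec] at hq
  have hQ : Qi • Q • D.bas u = D.bas u := by rw [smul_smul, Qi_mul_Q, one_smul]
  linear_combination (norm := module) -hq + hQ

lemma T_waPart_add_Qi_smul (s : B) (x : D.V) : D.T s (D.waPart s x) + Qi • D.waPart s x = 0 := by
  have : (D.T s + Qi • LinearMap.id) ∘ₗ D.waPart s = 0 := D.bas.ext fun u => by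
    by_cases h : WA cs I J s u <;> simp [waPart, h, D.T_rVec]
  simpa using LinearMap.congr_fun this x

lemma repr_waPart (s : B) (x : D.V) (v : I) :
    D.bas.repr (D.waPart s x) v = ∑ u ∈ (D.bas.repr x).support,
      D.bas.repr x u * if WA cs I J s u then toLaurent (D.r s u v) else 0 := by
  rw [waPart, D.bas.constr_apply, Finsupp.sum, map_sum, Finsupp.finsetSum_apply]
  refine Finset.sum_congr rfl fun u _ => ?_
  split_ifs <;> simp [repr_rVec]

lemma repr_waPart_mem_qPowPoly {s : B} {x : D.V} {n : ℤ}
    (hx : ∀ u : I, WA cs I J s u → D.bas.repr x u ∈ qPowPoly n) (v : I) :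
    D.bas.repr (D.waPart s x) v ∈ qPowPoly (n + 1) := by
  rw [repr_waPart]
  refine sum_mem fun u _ => ?_
  split_ifs with h
  · exact mul_mem_qPowPoly (hx u h) (toLaurent_mem_qPowPoly_one (D.r_const s u v))
  · rw [mul_zero]
    exact zero_mem _

lemma repr_waPart_eq_zero_of_length_lt {s : B} {x : D.V} {v : I}
    (hx : ∀ u : I, D.bas.repr x u ≠ 0 → cs.length u < cs.length v) :
    D.bas.repr (D.waPart s x) v = 0 := by
  rw [repr_waPart]
  refine Finset.sum_eq_zero fun u hu => ?_
  split_ifs with hwa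
  · suffices D.r s u v = 0 by simp [this]
    by_contra hr
    have h1 := (D.r_supp s u v hr).length_lt
    have h2 := hx u (Finsupp.mem_support_iff.mp hu)
    rcases cs.length_simple_mul u s with h3 | h3 <;> omega
  · rw [mul_zero]

/-- At a weak ascent `v`, `(q + q⁻¹) z_v = ∑_{u weak ascent} z_u r^s_{v,u}` with
`r^s_{v,u} ∈ qℤ[q]`; at a `v` where the order `d` of `z_v` is minimal, the left side has a
nonzero coefficient in degree `d - 1` and the right side does not. -/
lemma repr_eq_zero_of_eigen_of_WA {s : B} {z : D.V} (hz : D.T s z + Qi • z = 0) {v : I}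
    (hv : WA cs I J s v) : D.bas.repr z v = 0 := by
  by_contra hne
  set S := (D.bas.repr z).support.filter fun u : I => WA cs I J s u
  obtain ⟨v₀, hv₀, hmin⟩ := S.exists_min_image (fun u => (D.bas.repr z u).coeff.support.min)
    ⟨v, Finset.mem_filter.mpr ⟨Finsupp.mem_support_iff.mpr hne, hv⟩⟩
  obtain ⟨hv₀z, hv₀wa⟩ := Finset.mem_filter.mp hv₀
  obtain ⟨d, hd⟩ := Finset.min_of_nonempty (s := (D.bas.repr z v₀).coeff.support)
    (Finsupp.support_nonempty_iff.mpr
      fun h => Finsupp.mem_support_iff.mp hv₀z (AddMonoidAlgebra.coeff_eq_zero.mp h))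
  have hall : ∀ u : I, WA cs I J s u → D.bas.repr z u ∈ qPowPoly d := by
    intro u hu k hk
    by_contra hk'
    have hu' : u ∈ S := Finset.mem_filter.mpr
      ⟨Finsupp.mem_support_iff.mpr fun h0 => by simp [h0] at hk', hu⟩
    have := (hd ▸ hmin u hu').trans (Finset.min_le (Finsupp.mem_support_iff.mpr hk'))
    exact absurd (WithTop.coe_le_coe.mp this) (not_le.mpr hk)
  have heq := D.repr_T_add_Qi_smul s z v₀
  rw [hz, map_zero, Finsupp.zero_apply, dif_neg hv₀wa.2.2, diagCoeff_of_WA hv₀wa, zero_add,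
    eq_comm, sub_eq_zero] at heq
  have hcoeff := congrArg (fun a : A => a.coeff (d - 1)) heq
  simp only [coeff_Q_add_Qi_mul, sub_add_cancel] at hcoeff
  rw [hall v₀ hv₀wa (d - 1 - 1) (by omega), zero_add,
    D.repr_waPart_mem_qPowPoly hall v₀ (d - 1) (by omega)] at hcoeff
  exact Finsupp.mem_support_iff.mp (Finset.mem_of_min hd) hcoeff

lemma repr_simple_mul_of_eigen_of_SA {s : B} {z : D.V} (hz : D.T s z + Qi • z = 0) {v : I}
    (hv : SA cs I s v) : D.bas.repr z ⟨_, hv.2⟩ + Qi * D.bas.repr z v = 0 := by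
  have hwaPart : D.bas.repr (D.waPart s z) v = 0 := by
    rw [repr_waPart]
    refine Finset.sum_eq_zero fun u _ => ?_
    split_ifs with h
    · rw [D.repr_eq_zero_of_eigen_of_WA hz h, zero_mul]
    · rw [mul_zero]
  have heq := D.repr_T_add_Qi_smul s z v
  rwa [hz, map_zero, Finsupp.zero_apply, dif_pos hv.2, diagCoeff_of_SA hv, hwaPart, sub_zero,
    eq_comm] at heq

def barHom : D.V →+ D.V := AddMonoidHom.mk' D.bar D.bar_add

@[simp] lemma barHom_apply (x : D.V) : D.barHom x = D.bar x := rfl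

lemma bar_sub (x y : D.V) : D.bar (x - y) = D.bar x - D.bar y := map_sub D.barHom x y

lemma bar_eq_sum (x : D.V) : D.bar x = ∑ u ∈ (D.bas.repr x).support,
    invert (D.bas.repr x u) • D.bar (D.bas u) := by
  conv_lhs => rw [← D.bas.linearCombination_repr x, Finsupp.linearCombination_apply,
    Finsupp.sum, ← barHom_apply, map_sum]
  simp [D.bar_smul]

/-- Writing `u = s u'` with `ℓ(u') < ℓ(u)`, `bar(b_u) = (T_s - q + q⁻¹) bar(b_{u'})`. -/
lemma repr_bar_bas {u v : I} (h : cs.length u ≤ cs.length v) :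
    D.bas.repr (D.bar (D.bas u)) v = if v = u then 1 else 0 := by
  induction hn : cs.length (u : W) using Nat.strong_induction_on generalizing u v with
  | _ n ih =>
  by_cases hu1 : (u : W) = 1
  · obtain rfl : u = ⟨1, D.one_mem⟩ := Subtype.ext hu1
    rw [D.bar_one, D.bas.repr_self, Finsupp.single_apply]
    simp only [eq_comm]
  obtain ⟨s, hs⟩ := cs.exists_leftDescent_of_ne_one hu1
  set u' : I := ⟨_, D.simple_mul_mem hs⟩
  have hsu' : cs.simple s * (u' : W) = u := cs.simple_mul_simple_cancel_left s
  have hlen : cs.length (u' : W) + 1 = n := by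
    have : cs.length (u' : W) < cs.length u := hs
    rcases cs.length_simple_mul u s with h' | h' <;> simp only [u'] at * <;> omega
  have hSA : SA cs I s u' := ⟨by rw [hsu']; omega, hsu' ▸ u.2⟩
  have hT : D.T s (D.bas u') = D.bas u := by rw [D.act_SA s u' hSA]; congr 1; exact Subtype.ext hsu'
  set y := D.bar (D.bas u')
  have ihy : ∀ z : I, cs.length (u' : W) ≤ cs.length z →
      D.bas.repr y z = if z = u' then 1 else 0 :=
    fun z hz => ih _ (by omega) hz rfl
  have hyv : D.bas.repr y v = 0 := by
    rw [ihy v (by omega), if_neg]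
    rintro rfl
    omega
  have hwaPart : D.bas.repr (D.waPart s y) v = 0 := by
    refine D.repr_waPart_eq_zero_of_length_lt fun z hz => ?_
    by_contra hzv
    rw [ihy z (by omega), if_neg (by rintro rfl; omega)] at hz
    exact hz rfl
  have hbar : D.bar (D.bas u) = D.T s y + Qi • y - Q • y := by
    rw [← hT, D.bar_T]
    module
  have hθ := D.repr_T_add_Qi_smul s y v
  rw [hbar, map_sub, Finsupp.sub_apply, hθ, hwaPart, map_smul, Finsupp.smul_apply, hyv]
  simp only [mul_zero, smul_zero, sub_zero, add_zero]
  split_ifs with hv hvu hvu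
  · subst hvu
    rw [ihy _ le_rfl, if_pos rfl]
  · have : cs.length (u' : W) ≤ cs.length (cs.simple s * (v : W)) := by
      rcases cs.length_simple_mul v s with h' | h' <;> omega
    rw [ihy ⟨_, hv⟩ this, if_neg]
    exact fun heq => hvu (Subtype.ext (mul_left_cancel (congrArg Subtype.val heq)))
  · exact (hv (hvu ▸ D.simple_mul_mem hs)).elim
  · rfl

/-- At a coordinate `v` of maximal length, `bar` acts on the coefficient by `invert`. -/
lemma eq_zero_of_bar_eq_self {x : D.V} (hbar : D.bar x = x)
    (hx : ∀ v : I, D.bas.repr x v ∈ qPowPoly 1) : x = 0 := by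
  by_contra hx0
  obtain ⟨v, hv, hmax⟩ := (D.bas.repr x).support.exists_max_image (fun u => cs.length (u : W))
    (Finsupp.support_nonempty_iff.mpr (by simpa using hx0))
  have hinv : D.bas.repr (D.bar x) v = invert (D.bas.repr x v) := by
    rw [bar_eq_sum, map_sum, Finsupp.finsetSum_apply, Finset.sum_eq_single v]
    · simp [D.repr_bar_bas le_rfl]
    · intro u hu huv
      simp [D.repr_bar_bas (hmax u hu), huv.symm]
    · intro hv'; exact (hv' hv).elim
  rw [hbar] at hinv
  exact Finsupp.mem_support_iff.mp hv (eq_zero_of_invert_eq_self (hx v) hinv.symm)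

end WGModule

section CBasis

variable {cs} {I : Set W} {J : Set B}

/-- `b_w = c_w + ∑_{y < w} q p_{w,y} c_y` with `p_{w,y} = qp w y ∈ ℤ[q]`. -/
structure IsUnitriangular (D : WGModule cs I J) (c : I → D.V) (qp : I → I →₀ ℤ[X]) :
    Prop where
  lt_of_ne_zero : ∀ w y : I, qp w y ≠ 0 → BrLt cs (y : W) (w : W)
  bas_eq : ∀ w : I, D.bas w = c w + (qp w).sum fun y p => (Q * toLaurent p) • c y

lemma repr_finsum_zsmul {D : WGModule cs I J} {x : I → D.V} {n : I → ℤ}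
    (hn : (Function.support n).Finite) (y : I) :
    D.bas.repr (∑ᶠ v, n v • x v) y =
      ∑ v ∈ hn.toFinset, (n v : A) * D.bas.repr (x v) y := by
  have hsupp : Function.support (fun v => n v • x v) ⊆ hn.toFinset := fun v hv => by
    simpa using fun h : n v = 0 => hv (by simp [h])
  rw [finsum_eq_sum_of_support_subset _ hsupp, map_sum, Finsupp.finsetSum_apply]
  simp [zsmul_eq_mul]

namespace IsUnitriangular

variable {D : WGModule cs I J} {c : I → D.V} {qp : I → I →₀ ℤ[X]}

lemma qp_self (hc : IsUnitriangular D c qp) (y : I) : qp y y = 0 := by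
  by_contra h
  exact (hc.lt_of_ne_zero y y h).2 rfl

lemma repr_c (hc : IsUnitriangular D c qp) (y v : I) :
    D.bas.repr (c y) v = (if v = y then 1 else 0) -
      ∑ y' ∈ (qp y).support, Q * toLaurent (qp y y') * D.bas.repr (c y') v := by
  rw [eq_sub_of_add_eq (hc.bas_eq y).symm, map_sub, Finsupp.sub_apply, D.bas.repr_self,
    Finsupp.single_apply, Finsupp.sum, map_sum, Finsupp.finsetSum_apply]
  simp [eq_comm]

lemma repr_c_self_and_off_diag (hc : IsUnitriangular D c qp) (y : I) :
    D.bas.repr (c y) y = 1 ∧ ∀ v, v ≠ y → D.bas.repr (c y) v ∈ qPowPoly 1 ∧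
      (cs.length (y : W) ≤ cs.length (v : W) → D.bas.repr (c y) v = 0) := by
  induction hn : cs.length (y : W) using Nat.strong_induction_on generalizing y with
  | _ n ih =>
  have hlt : ∀ y' ∈ (qp y).support, cs.length (y' : W) < n := fun y' hy' =>
    hn ▸ (hc.lt_of_ne_zero y y' (Finsupp.mem_support_iff.mp hy')).length_lt
  have hvanish : ∀ v : I, n ≤ cs.length (v : W) → ∀ y' ∈ (qp y).support,
      Q * toLaurent (qp y y') * D.bas.repr (c y') v = 0 := by
    intro v hv y' hy'
    have h := hlt y' hy'
    rw [((ih _ h y' rfl).2 v (by rintro rfl; omega)).2 (by omega), mul_zero]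
  refine ⟨?_, fun v hv => ⟨?_, fun hle => ?_⟩⟩
  · rw [hc.repr_c, if_pos rfl, Finset.sum_eq_zero (hvanish y hn.ge), sub_zero]
  · rw [hc.repr_c, if_neg hv, zero_sub]
    refine neg_mem (sum_mem fun y' hy' => ?_)
    have hm : D.bas.repr (c y') v ∈ qPowPoly 0 := by
      rcases eq_or_ne v y' with rfl | hvy'
      · rw [(ih _ (hlt _ hy') _ rfl).1]
        exact one_mem_qPowPoly
      · exact qPowPoly_anti zero_le_one ((ih _ (hlt _ hy') _ rfl).2 v hvy').1
    simpa using mul_mem_qPowPoly (mul_mem_qPowPoly Q_mem_qPowPoly (toLaurent_mem_qPowPoly _)) hm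
  · rw [hc.repr_c, if_neg hv, Finset.sum_eq_zero (hvanish v (hn ▸ hle)), sub_zero]

lemma repr_c_self (hc : IsUnitriangular D c qp) (y : I) : D.bas.repr (c y) y = 1 :=
  (hc.repr_c_self_and_off_diag y).1

lemma repr_c_mem_qPowPoly_one (hc : IsUnitriangular D c qp) {y v : I} (h : v ≠ y) :
    D.bas.repr (c y) v ∈ qPowPoly 1 :=
  ((hc.repr_c_self_and_off_diag y).2 v h).1

lemma repr_c_eq_zero (hc : IsUnitriangular D c qp) {y v : I} (h : v ≠ y)
    (hle : cs.length (y : W) ≤ cs.length (v : W)) : D.bas.repr (c y) v = 0 :=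
  ((hc.repr_c_self_and_off_diag y).2 v h).2 hle

lemma repr_c_mem_qPowPoly_zero (hc : IsUnitriangular D c qp) (y v : I) :
    D.bas.repr (c y) v ∈ qPowPoly 0 := by
  rcases eq_or_ne v y with rfl | h
  · rw [hc.repr_c_self]
    exact one_mem_qPowPoly
  · exact qPowPoly_anti zero_le_one (hc.repr_c_mem_qPowPoly_one h)

lemma coeff_zero_repr_c (hc : IsUnitriangular D c qp) (y v : I) :
    (D.bas.repr (c y) v).coeff 0 = if v = y then 1 else 0 := by
  split_ifs with h
  · subst h
    simp [hc.repr_c_self]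
  · exact hc.repr_c_mem_qPowPoly_one h 0 one_pos

lemma coeff_one_repr_c (hc : IsUnitriangular D c qp) (y v : I) :
    (D.bas.repr (c y) v).coeff 1 = -(qp y v).coeff 0 := by
  rcases eq_or_ne v y with rfl | hvy
  · simp [hc.repr_c_self, hc.qp_self, ← LaurentPolynomial.T_zero]
  rw [hc.repr_c, if_neg hvy, zero_sub, AddMonoidAlgebra.coeff_neg, Finsupp.neg_apply,
    AddMonoidAlgebra.coeff_sum, Finsupp.finsetSum_apply, neg_inj]
  simp_rw [mul_assoc, coeff_Q_mul, sub_self]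
  rw [Finset.sum_eq_single v]
  · rw [hc.repr_c_self, mul_one]
    simpa using coeff_toLaurent_natCast (qp y v) 0
  · intro y' _ hy'
    exact mul_mem_qPowPoly (toLaurent_mem_qPowPoly _) (hc.repr_c_mem_qPowPoly_one hy'.symm) 0
      (by norm_num)
  · intro hv
    simp [Finsupp.notMem_support_iff.mp hv]

lemma repr_finsum_zsmul_c_of_length (hc : IsUnitriangular D c qp) {n : I → ℤ}
    (hn : (Function.support n).Finite) {y : I}
    (hy : ∀ v, n v ≠ 0 → v ≠ y → cs.length (v : W) ≤ cs.length (y : W)) :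
    D.bas.repr (∑ᶠ v, n v • c v) y = n y := by
  rw [repr_finsum_zsmul hn, Finset.sum_eq_single y]
  · rw [hc.repr_c_self, mul_one]
  · intro v hv hvy
    rw [hc.repr_c_eq_zero (Ne.symm hvy) (hy v (by simpa using hv) hvy), mul_zero]
  · intro hy'
    simp [by simpa using hy']

lemma repr_finsum_zsmul_c_sub_mem (hc : IsUnitriangular D c qp) {n : I → ℤ}
    (hn : (Function.support n).Finite) (y : I) :
    D.bas.repr (∑ᶠ v, n v • c v) y - n y ∈ qPowPoly 1 := by
  have : (n y : A) = ∑ v ∈ hn.toFinset, (n v : A) * if y = v then 1 else 0 := by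
    simp +contextual [Finset.sum_ite_eq]
  rw [repr_finsum_zsmul hn, this, ← Finset.sum_sub_distrib]
  refine sum_mem fun v _ => ?_
  rw [← mul_sub]
  have hm : D.bas.repr (c v) y - (if y = v then 1 else 0) ∈ qPowPoly 1 := by
    split_ifs with h
    · rw [h, hc.repr_c_self, sub_self]
      exact zero_mem _
    · rw [sub_zero]
      exact hc.repr_c_mem_qPowPoly_one h
  simpa using mul_mem_qPowPoly (intCast_mem_qPowPoly _) hm

lemma eq_finsum_of_bar_eq_self (hc : IsUnitriangular D c qp)
    (hcbar : ∀ w : I, D.bar (c w) = c w) {x : D.V} (hbar : D.bar x = x)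
    (hx : ∀ v : I, D.bas.repr x v ∈ qPowPoly 0) :
    x = ∑ᶠ v, (D.bas.repr x v).coeff 0 • c v := by
  set n : I → ℤ := fun v => (D.bas.repr x v).coeff 0
  have hn : (Function.support n).Finite := (D.bas.repr x).support.finite_toSet.subset
    fun v hv => Finsupp.mem_support_iff.mpr fun h => hv (by simp [n, h])
  have hnc : (Function.support fun v => n v • c v).Finite :=
    hn.subset fun v hv h => hv (by simp [h])
  rw [← sub_eq_zero]
  refine D.eq_zero_of_bar_eq_self ?_ fun v => ?_
  · rw [D.bar_sub, hbar, ← D.barHom_apply, map_finsum _ hnc]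
    refine congrArg _ (finsum_congr fun v => ?_)
    rw [map_zsmul, D.barHom_apply, hcbar]
  · rw [map_sub, Finsupp.sub_apply]
    convert sub_mem (sub_coeff_zero_mem_qPowPoly (hx v)) (hc.repr_finsum_zsmul_c_sub_mem hn v)
      using 1
    ring

lemma repr_T_c_add_Qi_smul_sub_mem (hc : IsUnitriangular D c qp) {s : B} {w : I} {a : A}
    (ha : a ∈ qPowPoly (-1)) (haw : diagCoeff cs I J s (w : W) - a ∈ qPowPoly 0) (v : I) :
    D.bas.repr (D.T s (c w) + Qi • c w - a • c w) v ∈ qPowPoly 0 := by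
  rw [map_sub, Finsupp.sub_apply, D.repr_T_add_Qi_smul, map_smul, Finsupp.smul_apply,
    smul_eq_mul, show ∀ d e f g : A, d + e * g - f - a * g = d - f + (e - a) * g by intros; ring]
  refine add_mem (sub_mem ?_ ?_) ?_
  · split_ifs
    exacts [hc.repr_c_mem_qPowPoly_zero _ _, zero_mem _]
  · exact qPowPoly_anti zero_le_one
      (D.repr_waPart_mem_qPowPoly (fun u _ => hc.repr_c_mem_qPowPoly_zero w u) v)
  · rcases eq_or_ne v w with rfl | hvw
    · rwa [hc.repr_c_self, mul_one]
    · simpa using mul_mem_qPowPoly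
        (sub_mem (diagCoeff_mem_qPowPoly (I := I) (J := J) s (v : W)) ha)
        (hc.repr_c_mem_qPowPoly_one hvw)

lemma coeff_zero_repr_T_c_add_Qi_smul (hc : IsUnitriangular D c qp) (s : B) (w v : I) :
    (D.bas.repr (D.T s (c w) + Qi • c w) v).coeff 0 =
      (if (v : W) = cs.simple s * w then 1 else 0) -
        if Desc cs J s v then 0 else (qp w v).coeff 0 := by
  rw [D.repr_T_add_Qi_smul, AddMonoidAlgebra.coeff_sub, AddMonoidAlgebra.coeff_add,
    Finsupp.sub_apply, Finsupp.add_apply,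
    coeff_zero_diagCoeff_mul D.subset s v (hc.repr_c_mem_qPowPoly_zero w v),
    hc.coeff_one_repr_c, D.repr_waPart_mem_qPowPoly (fun u _ => hc.repr_c_mem_qPowPoly_zero w u)
      v 0 (by norm_num), sub_zero]
  have hdite :
      (if h : cs.simple s * (v : W) ∈ I then D.bas.repr (c w) ⟨_, h⟩ else 0).coeff 0 =
        if (v : W) = cs.simple s * w then 1 else 0 := by
    split_ifs with h hvw hvw
    · rw [hc.coeff_zero_repr_c, if_pos (Subtype.ext (simple_mul_eq_iff.mpr hvw))]
    · rw [hc.coeff_zero_repr_c,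
        if_neg fun h' => hvw (simple_mul_eq_iff.mp (congrArg Subtype.val h'))]
    · exact (h (by rw [simple_mul_eq_iff.mpr hvw]; exact w.2)).elim
    · rfl
  rw [hdite]
  split_ifs <;> ring

lemma eq_zero_of_repr_T_c_add_Qi_smul_eq_intCast (hc : IsUnitriangular D c qp) {s : B} {w : I}
    (hw : Desc cs J s w) {y : I} {k : ℤ} (hy : D.bas.repr (D.T s (c w) + Qi • c w) y = k)
    (hlong : ∀ z : I, cs.length (y : W) < cs.length (z : W) →
      D.bas.repr (D.T s (c w) + Qi • c w) z = 0) : k = 0 := by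
  set m := D.bas.repr (c w)
  set P := D.bas.repr (D.waPart s (c w))
  have hP : ∀ v, P v ∈ qPowPoly 1 :=
    D.repr_waPart_mem_qPowPoly fun u _ => hc.repr_c_mem_qPowPoly_zero w u
  have hP₂ : ∀ v, P v ∈ qPowPoly 2 := D.repr_waPart_mem_qPowPoly (n := 1) fun u hu =>
    hc.repr_c_mem_qPowPoly_one fun h => hu.not_desc (h ▸ hw)
  have hθ := D.repr_T_add_Qi_smul s (c w) y
  rw [hy] at hθ
  rcases SD_or_SA_or_WA_or_WD (I := I) (J := J) s (y : W) with h | h | h | h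
  · have hne : (⟨_, D.simple_mul_mem h⟩ : I) ≠ w := by
      rintro rfl
      refine SA.not_desc D.subset ⟨?_, ?_⟩ hw <;> rw [cs.simple_mul_simple_cancel_left]
      exacts [h, y.2]
    rw [dif_pos (D.simple_mul_mem h), diagCoeff_of_SD h] at hθ
    refine eq_zero_of_intCast_mem_qPowPoly
      (hθ ▸ sub_mem (add_mem (hc.repr_c_mem_qPowPoly_one hne) ?_) (hP y))
    simpa using mul_mem_qPowPoly Q_mem_qPowPoly (hc.repr_c_mem_qPowPoly_zero w y)
  · set σ : I := ⟨_, h.2⟩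
    have hσy : cs.simple s * (σ : W) = y := cs.simple_mul_simple_cancel_left s
    have hσ : SD cs s σ := by
      show cs.length (cs.simple s * (σ : W)) < cs.length (σ : W)
      rw [hσy]
      exact h.1
    have h0 := D.repr_T_add_Qi_smul s (c w) σ
    rw [hlong σ h.1, dif_pos (D.simple_mul_mem hσ), diagCoeff_of_SD hσ,
      show (⟨_, D.simple_mul_mem hσ⟩ : I) = y from Subtype.ext hσy] at h0
    have hPσ := D.repr_simple_mul_of_eigen_of_SA (D.T_waPart_add_Qi_smul s (c w)) h
    rw [dif_pos h.2, diagCoeff_of_SA h] at hθ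
    -- the coordinates at `y` and at `σ = s y` (which vanishes), with `P σ = -q⁻¹ P y`,
    -- give `k = -(q + q⁻¹) q⁻¹ P y`
    refine eq_zero_of_Q_add_Qi_mul_eq_intCast (f := -(Qi * P y)) (neg_mem ?_) ?_
    · simpa using mul_mem_qPowPoly Qi_mem_qPowPoly (hP₂ y)
    · linear_combination -hθ + Qi * h0 - Qi * hPσ + (m σ - P y) * Qi_mul_Q
  · have hyw : y ≠ w := fun h' => h.not_desc (h' ▸ hw)
    rw [dif_neg h.2.2, diagCoeff_of_WA h,
      D.repr_eq_zero_of_eigen_of_WA (D.T_waPart_add_Qi_smul s _) h, zero_add, sub_zero] at hθ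
    exact eq_zero_of_Q_add_Qi_mul_eq_intCast (hc.repr_c_mem_qPowPoly_one hyw) hθ.symm
  · rw [dif_neg fun h' => h.2 (D.subset h'), diagCoeff_of_WD D.subset h, zero_mul, add_zero,
      zero_sub] at hθ
    exact eq_zero_of_intCast_mem_qPowPoly (hθ ▸ neg_mem (hP y))

theorem T_c_add_Qi_smul_of_desc (hc : IsUnitriangular D c qp)
    (hcbar : ∀ w : I, D.bar (c w) = c w) {s : B} {w : I} (hw : Desc cs J s w) :
    D.T s (c w) + Qi • c w = 0 := by
  set x := D.T s (c w) + Qi • c w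
  have hbar : D.bar x = x := by
    rw [D.bar_add, D.bar_smul, D.bar_T, hcbar, invert_Qi]
    module
  have hdiag : diagCoeff cs I J s (w : W) - 0 ∈ qPowPoly 0 := by
    rw [sub_zero]
    rcases hw with h | h
    · exact diagCoeff_of_SD h ▸ qPowPoly_anti zero_le_one Q_mem_qPowPoly
    · exact diagCoeff_of_WD D.subset h ▸ zero_mem _
  have hmem : ∀ v, D.bas.repr x v ∈ qPowPoly 0 := fun v => by
    simpa only [zero_smul, sub_zero] using hc.repr_T_c_add_Qi_smul_sub_mem (zero_mem _) hdiag v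
  set n : I → ℤ := fun v => (D.bas.repr x v).coeff 0
  have hx : x = ∑ᶠ v, n v • c v := hc.eq_finsum_of_bar_eq_self hcbar hbar hmem
  have hn : (Function.support n).Finite := (D.bas.repr x).support.finite_toSet.subset
    fun v hv => Finsupp.mem_support_iff.mpr fun h => hv (by simp [n, h])
  suffices ∀ v, n v = 0 by rw [hx]; simp [this]
  by_contra! ⟨v, hv⟩
  obtain ⟨y, hy, hmax⟩ := hn.toFinset.exists_max_image (fun u => cs.length (u : W))
    ⟨v, hn.mem_toFinset.mpr hv⟩
  have hmax' : ∀ u, n u ≠ 0 → cs.length (u : W) ≤ cs.length (y : W) :=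
    fun u hu => hmax u (hn.mem_toFinset.mpr hu)
  refine hn.mem_toFinset.mp hy
    (hc.eq_zero_of_repr_T_c_add_Qi_smul_eq_intCast (y := y) hw ?_ fun z hz => ?_)
  · change D.bas.repr x y = _
    rw [hx]
    exact hc.repr_finsum_zsmul_c_of_length hn fun u hu _ => hmax' u hu
  · change D.bas.repr x z = _
    rw [hx, hc.repr_finsum_zsmul_c_of_length hn fun u hu _ => (hmax' u hu).trans hz.le]
    rw [show n z = 0 from by_contra fun hz' => (hmax' z hz').not_gt hz, Int.cast_zero]

lemma coeff_zero_qp_of_desc (hc : IsUnitriangular D c qp) (hcbar : ∀ w : I, D.bar (c w) = c w)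
    {s : B} {u v : I} (hu : Desc cs J s u) (hv : ¬ Desc cs J s v) :
    (qp u v).coeff 0 = if (v : W) = cs.simple s * u then 1 else 0 := by
  have h := hc.coeff_zero_repr_T_c_add_Qi_smul s u v
  simp only [hc.T_c_add_Qi_smul_of_desc hcbar hu, map_zero, Finsupp.coe_zero, Pi.zero_apply,
    AddMonoidAlgebra.coeff_zero, if_neg hv] at h
  split_ifs at h ⊢ <;> omega

theorem T_c_sub_Q_smul_of_not_desc (hc : IsUnitriangular D c qp)
    (hcbar : ∀ w : I, D.bar (c w) = c w) {s : B} {w : I} (hw : ¬ Desc cs J s w) :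
    D.T s (c w) - Q • c w = ∑ᶠ v : I, ((if (v : W) = cs.simple s * w then 1 else 0) +
      if Desc cs J s v then (qp w v).coeff 0 else 0) • c v := by
  set x := D.T s (c w) - Q • c w
  have hx : x = D.T s (c w) + Qi • c w - (Q + Qi) • c w := by module
  have hbar : D.bar x = x := by
    rw [D.bar_sub, D.bar_smul, D.bar_T, hcbar, invert_Q]
    module
  have hdiag : diagCoeff cs I J s (w : W) - (Q + Qi) ∈ qPowPoly 0 := by
    rcases SA_or_WA_of_not_desc (I := I) hw with h | h
    · rw [diagCoeff_of_SA h, sub_add_cancel_right]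
      exact neg_mem (qPowPoly_anti zero_le_one Q_mem_qPowPoly)
    · rw [diagCoeff_of_WA h, sub_self]
      exact zero_mem _
  have hmem : ∀ v, D.bas.repr x v ∈ qPowPoly 0 := fun v => hx ▸
    hc.repr_T_c_add_Qi_smul_sub_mem
      (add_mem (qPowPoly_anti (by norm_num) Q_mem_qPowPoly) Qi_mem_qPowPoly) hdiag v
  conv_lhs => rw [hc.eq_finsum_of_bar_eq_self hcbar hbar hmem]
  refine finsum_congr fun v => congrArg (· • c v) ?_
  rw [hx, map_sub, Finsupp.sub_apply, AddMonoidAlgebra.coeff_sub, Finsupp.sub_apply,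
    hc.coeff_zero_repr_T_c_add_Qi_smul, map_smul, Finsupp.smul_apply, smul_eq_mul,
    coeff_Q_add_Qi_mul, zero_sub, zero_add, hc.coeff_one_repr_c,
    hc.repr_c_mem_qPowPoly_zero w v (-1) (by norm_num)]
  split_ifs <;> ring

lemma ascent_coeff_eq (hc : IsUnitriangular D c qp) (hcbar : ∀ w : I, D.bar (c w) = c w)
    {s : B} {w : I} (hw : ¬ Desc cs J s w) (u : I) :
    (if (u : W) = cs.simple s * w then 1 else 0) +
      (if Desc cs J s u then (qp w u).coeff 0 else 0) =
    if Desc cs J s (u : W) then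
      (if BrLt cs (u : W) (w : W) then (qp w u).coeff 0
       else if BrLt cs (w : W) (u : W) then (qp u w).coeff 0 else 0)
    else 0 := by
  have hlen := length_lt_of_not_desc hw
  have hqp : ¬ BrLt cs (u : W) (w : W) → qp w u = 0 := fun h =>
    by_contra fun h' => h (hc.lt_of_ne_zero w u h')
  by_cases hu : Desc cs J s u
  · rw [if_pos hu, if_pos hu]
    by_cases h₁ : BrLt cs (u : W) (w : W)
    · rw [if_pos h₁, if_neg fun h => lt_asymm hlen (by simpa [h] using h₁.length_lt), zero_add]
    · rw [if_neg h₁, hqp h₁, Polynomial.coeff_zero, add_zero]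
      split_ifs with h₂ h₃ h₃
      · rw [hc.coeff_zero_qp_of_desc hcbar hu hw, if_pos (simple_mul_eq_iff.mpr h₂).symm]
      · exact (h₃ (h₂ ▸ brLt_simple_mul hlen)).elim
      · rw [hc.coeff_zero_qp_of_desc hcbar hu hw,
          if_neg fun h => h₂ (simple_mul_eq_iff.mp h.symm)]
      · rfl
  · rw [if_neg hu, if_neg hu, add_zero, if_neg]
    intro h
    refine hu (.inl (show cs.length (cs.simple s * (u : W)) < cs.length (u : W) from ?_))
    rwa [h, cs.simple_mul_simple_cancel_left]

end IsUnitriangular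

end CBasis

/-- `(C, μ, τ)` is a `W`-graph: the generators act on the `c_w` by the
`W`-graph formulas with `τ(c_w) = D_J(w)` and edge weights `μ`. -/
theorem stmt11 (I : Set W) (J : Set B) (D : WGModule cs I J)
    (c : I → D.V) (qp : I → I →₀ Polynomial ℤ)
    (hcbar : ∀ w : I, D.bar (c w) = c w)
    (hsupp : ∀ w y : I, qp w y ≠ 0 → BrLt cs (y : W) (w : W))
    (htrans : ∀ w : I,
      D.bas w = c w + (qp w).sum fun y p => (Q * Polynomial.toLaurent p) • c y)
    (s : B) (w : I) :
    (Desc cs J s (w : W) → D.T s (c w) = -Qi • c w) ∧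
    (¬ Desc cs J s (w : W) → D.T s (c w) = Q • c w +
      ∑ᶠ u : I,
        (if Desc cs J s (u : W) then
          (if BrLt cs (u : W) (w : W) then (qp w u).coeff 0
           else if BrLt cs (w : W) (u : W) then (qp u w).coeff 0 else 0)
         else 0) • c u) := by
  have hc : IsUnitriangular D c qp := ⟨hsupp, htrans⟩
  refine ⟨fun hw => ?_, fun hw => ?_⟩
  · rw [neg_smul, eq_neg_iff_add_eq_zero]
    exact hc.T_c_add_Qi_smul_of_desc hcbar hw
  · rw [← sub_eq_iff_eq_add', hc.T_c_sub_Q_smul_of_not_desc hcbar hw]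
    exact finsum_congr fun u => by rw [hc.ascent_coeff_eq hcbar hw u]

end WGI
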